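/- For all positive integers t and s, the complete bipartite graph K_{4t,4s} admits an almost 2-perfect 8-cycle decomposition. -/

import Mathlib

open Finset

/-- The edge set of the closed walk visiting `f 0, f 1, ..., f (m-1)` and back to `f 0`. -/
def cycleEdges {V : Type*} [DecidableEq V] (m : ℕ) (f : ℕ → V) : Finset (Sym2 V) :=
  (Finset.range m).image (fun i => s(f i, f ((i + 1) % m)))

/-- `f` describes an `m`-cycle: its first `m` values are pairwise distinct. -/
def IsCycleMap {V : Type*} (m : ℕ) (f : ℕ → V) : Prop :=
  Set.InjOn f ↑(Finset.range m)

/-- Vertex set of the cycle described by `f`. -/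
def cycleVerts {V : Type*} [DecidableEq V] (m : ℕ) (f : ℕ → V) : Finset V :=
  (Finset.range m).image f

/-- `g` is an inside `m`-cycle of `f`: same vertex set and edge-disjoint. -/
def IsInsideOf {V : Type*} [DecidableEq V] (m : ℕ) (g f : ℕ → V) : Prop :=
  IsCycleMap m g ∧ cycleVerts m g = cycleVerts m f ∧
    Disjoint (cycleEdges m f) (cycleEdges m g)

/-- Edge set of the complete graph on `V`. -/
def kEdges (V : Type*) [Fintype V] [DecidableEq V] : Finset (Sym2 V) :=
  Finset.univ.filter (fun e => ¬ e.IsDiag)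

/-- Edge set of the complete bipartite graph `K_{r,s}`. -/
def bipEdges (r s : ℕ) : Finset (Sym2 (Fin r ⊕ Fin s)) :=
  (Finset.univ : Finset (Fin r × Fin s)).image (fun p => s(Sum.inl p.1, Sum.inr p.2))

/-- `E` admits an almost 2-perfect 8-cycle decomposition. -/
def HasA2PDecomp {V : Type*} [DecidableEq V] (E : Finset (Sym2 V)) : Prop :=
  ∃ (k : ℕ) (c c' : Fin k → ℕ → V),
    (∀ i, IsCycleMap 8 (c i)) ∧
    (∀ i j, i ≠ j → Disjoint (cycleEdges 8 (c i)) (cycleEdges 8 (c j))) ∧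
    Finset.univ.sup (fun i => cycleEdges 8 (c i)) = E ∧
    (∀ i, IsInsideOf 8 (c' i) (c i)) ∧
    (∀ i j, i ≠ j → Disjoint (cycleEdges 8 (c' i)) (cycleEdges 8 (c' j))) ∧
    Finset.univ.sup (fun i => cycleEdges 8 (c' i)) = E

/-- `E` admits an almost 2-perfect 8-cycle packing with leave `L`. -/
def HasA2PPacking {V : Type*} [DecidableEq V] (E L : Finset (Sym2 V)) : Prop :=
  L ⊆ E ∧ ∃ (k : ℕ) (c c' : Fin k → ℕ → V),
    (∀ i, IsCycleMap 8 (c i)) ∧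
    (∀ i j, i ≠ j → Disjoint (cycleEdges 8 (c i)) (cycleEdges 8 (c j))) ∧
    Finset.univ.sup (fun i => cycleEdges 8 (c i)) = E \ L ∧
    (∀ i, IsInsideOf 8 (c' i) (c i)) ∧
    (∀ i j, i ≠ j → Disjoint (cycleEdges 8 (c' i)) (cycleEdges 8 (c' j))) ∧
    Finset.univ.sup (fun i => cycleEdges 8 (c' i)) = E \ L

/-- A 1-factor (perfect matching) as a set of edges. -/
def IsOneFactor {V : Type*} (L : Finset (Sym2 V)) : Prop :=
  (∀ e ∈ L, ¬ e.IsDiag) ∧ ∀ v : V, ∃! e, e ∈ L ∧ v ∈ e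

/-!
`K_{4,4}` is the union of two edge-disjoint Hamiltonian 8-cycles, each of which serves as the
inside cycle of the other. Almost 2-perfect decompositions transport along injective vertex maps
and glue along edge-disjoint unions, and `K_{4t,4s}` is the edge-disjoint union of the `t * s`
copies of `K_{4,4}` spanned by the blocks `{a + t * x | x < 4} × {b + s * y | y < 4}`.
-/

open Function

section Decompositions

variable {V W ι : Type*} {m : ℕ}

lemma IsCycleMap.comp {v : V → W} (hv : Injective v) {f : ℕ → V} (hf : IsCycleMap m f) :
    IsCycleMap m (v ∘ f) :=
  hv.comp_injOn hf

variable [DecidableEq V] [DecidableEq W]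

lemma cycleEdges_comp (v : V → W) (f : ℕ → V) :
    cycleEdges m (v ∘ f) = (cycleEdges m f).image (Sym2.map v) := by
  simp only [cycleEdges, image_image]
  rfl

lemma cycleVerts_comp (v : V → W) (f : ℕ → V) :
    cycleVerts m (v ∘ f) = (cycleVerts m f).image v :=
  image_image.symm

lemma IsInsideOf.comp {v : V → W} (hv : Injective v) {f g : ℕ → V} (h : IsInsideOf m g f) :
    IsInsideOf m (v ∘ g) (v ∘ f) := by
  obtain ⟨hg, hverts, hdisj⟩ := h
  refine ⟨hg.comp hv, by rw [cycleVerts_comp, cycleVerts_comp, hverts], ?_⟩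
  rw [cycleEdges_comp, cycleEdges_comp]
  exact (disjoint_image (Sym2.map.injective hv)).2 hdisj

variable [Fintype ι]

structure IsCycleDecomp (m : ℕ) (E : Finset (Sym2 V)) (c : ι → ℕ → V) : Prop where
  isCycleMap : ∀ i, IsCycleMap m (c i)
  pairwise_disjoint : Pairwise (Disjoint on fun i => cycleEdges m (c i))
  sup_eq : univ.sup (fun i => cycleEdges m (c i)) = E

structure IsAlmost2PerfectDecomp (m : ℕ) (E : Finset (Sym2 V)) (c c' : ι → ℕ → V) : Prop where
  isCycleDecomp : IsCycleDecomp m E c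
  isCycleDecomp' : IsCycleDecomp m E c'
  isInsideOf : ∀ i, IsInsideOf m (c' i) (c i)

namespace IsCycleDecomp

variable {E : Finset (Sym2 V)} {c : ι → ℕ → V}

lemma cycleEdges_subset (h : IsCycleDecomp m E c) (i : ι) : cycleEdges m (c i) ⊆ E :=
  h.sup_eq ▸ le_sup (f := fun i => cycleEdges m (c i)) (mem_univ i)

lemma comp_equiv {κ : Type*} [Fintype κ] (h : IsCycleDecomp m E c) (e : κ ≃ ι) :
    IsCycleDecomp m E (c ∘ e) where
  isCycleMap k := h.isCycleMap (e k)
  pairwise_disjoint := h.pairwise_disjoint.comp_of_injective e.injective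
  sup_eq := by
    rw [← h.sup_eq, ← map_univ_equiv e, sup_map]
    rfl

lemma map (h : IsCycleDecomp m E c) {v : V → W} (hv : Injective v) :
    IsCycleDecomp m (E.image (Sym2.map v)) (fun i => v ∘ c i) where
  isCycleMap i := (h.isCycleMap i).comp hv
  pairwise_disjoint i j hij := by
    simp only [onFun, cycleEdges_comp]
    exact (disjoint_image (Sym2.map.injective hv)).2 (h.pairwise_disjoint hij)
  sup_eq := by
    simp only [cycleEdges_comp, ← h.sup_eq, sup_eq_biUnion, biUnion_image]

lemma sigma {κ : ι → Type*} [∀ j, Fintype (κ j)] {E : ι → Finset (Sym2 V)}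
    {c : (j : ι) → κ j → ℕ → V} (h : ∀ j, IsCycleDecomp m (E j) (c j))
    (hE : Pairwise (Disjoint on E)) :
    IsCycleDecomp m (univ.sup E) (fun p : Σ j, κ j => c p.1 p.2) where
  isCycleMap p := (h p.1).isCycleMap p.2
  pairwise_disjoint := by
    rintro ⟨j, k⟩ ⟨j', k'⟩ hne
    by_cases hj : j = j'
    · subst hj
      exact (h j).pairwise_disjoint fun hk : k = k' => hne (hk ▸ rfl)
    · exact (hE hj).mono ((h j).cycleEdges_subset k) ((h j').cycleEdges_subset k')
  sup_eq := by
    rw [← univ_sigma_univ, sup_sigma]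
    exact sup_congr rfl fun j _ => (h j).sup_eq

end IsCycleDecomp

namespace IsAlmost2PerfectDecomp

variable {E : Finset (Sym2 V)} {c c' : ι → ℕ → V}

lemma of_perm (h : IsCycleDecomp m E c) (σ : Equiv.Perm ι)
    (hσ : ∀ i, IsInsideOf m (c (σ i)) (c i)) : IsAlmost2PerfectDecomp m E c (c ∘ σ) :=
  ⟨h, h.comp_equiv σ, hσ⟩

lemma map (h : IsAlmost2PerfectDecomp m E c c') {v : V → W} (hv : Injective v) :
    IsAlmost2PerfectDecomp m (E.image (Sym2.map v)) (fun i => v ∘ c i) (fun i => v ∘ c' i) :=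
  ⟨h.isCycleDecomp.map hv, h.isCycleDecomp'.map hv, fun i => (h.isInsideOf i).comp hv⟩

lemma sigma {κ : ι → Type*} [∀ j, Fintype (κ j)] {E : ι → Finset (Sym2 V)}
    {c c' : (j : ι) → κ j → ℕ → V} (h : ∀ j, IsAlmost2PerfectDecomp m (E j) (c j) (c' j))
    (hE : Pairwise (Disjoint on E)) :
    IsAlmost2PerfectDecomp m (univ.sup E) (fun p : Σ j, κ j => c p.1 p.2)
      (fun p => c' p.1 p.2) :=
  ⟨.sigma (fun j => (h j).isCycleDecomp) hE, .sigma (fun j => (h j).isCycleDecomp') hE,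
    fun p => (h p.1).isInsideOf p.2⟩

lemma hasA2PDecomp (h : IsAlmost2PerfectDecomp 8 E c c') : HasA2PDecomp E := by
  let e := (Fintype.equivFin ι).symm
  obtain ⟨hc, hcd, hcE⟩ := h.isCycleDecomp.comp_equiv e
  obtain ⟨-, hcd', hcE'⟩ := h.isCycleDecomp'.comp_equiv e
  exact ⟨_, c ∘ e, c' ∘ e, hc, hcd, hcE, fun i => h.isInsideOf (e i), hcd', hcE'⟩

end IsAlmost2PerfectDecomp

end Decompositions

lemma isCycleMap_iff {V : Type*} {m : ℕ} {f : ℕ → V} :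
    IsCycleMap m f ↔ ∀ i < m, ∀ j < m, f i = f j → i = j := by
  simp [IsCycleMap, Set.InjOn]

def k44Cycle : Fin 2 → ℕ → Fin 4 ⊕ Fin 4
  | 0, n => (![.inl 0, .inr 0, .inl 1, .inr 1, .inl 2, .inr 2, .inl 3, .inr 3] : Fin 8 → _)
      (Fin.ofNat 8 n)
  | 1, n => (![.inl 0, .inr 2, .inl 1, .inr 3, .inl 2, .inr 0, .inl 3, .inr 1] : Fin 8 → _)
      (Fin.ofNat 8 n)

lemma isCycleDecomp_k44Cycle : IsCycleDecomp 8 (bipEdges 4 4) k44Cycle where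
  isCycleMap i := isCycleMap_iff.2 (by fin_cases i <;> decide)
  pairwise_disjoint i j hij := by
    fin_cases i <;> fin_cases j <;> first | exact absurd rfl hij | decide
  sup_eq := by decide

lemma isInsideOf_k44Cycle (i : Fin 2) : IsInsideOf 8 (k44Cycle (i + 1)) (k44Cycle i) := by
  fin_cases i <;> refine ⟨isCycleDecomp_k44Cycle.isCycleMap _, by decide, by decide⟩

section Blocks

variable {n m t s : ℕ}

lemma mem_bipEdges {p q : ℕ} {e : Sym2 (Fin p ⊕ Fin q)} :
    e ∈ bipEdges p q ↔ ∃ x y, s(.inl x, .inr y) = e := by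
  simp [bipEdges]

def blockEmbedding (a : Fin t) (b : Fin s) : Fin n ⊕ Fin m → Fin (n * t) ⊕ Fin (m * s) :=
  Sum.map (fun x => finProdFinEquiv (x, a)) (fun y => finProdFinEquiv (y, b))

lemma blockEmbedding_injective (a : Fin t) (b : Fin s) :
    Injective (blockEmbedding (n := n) (m := m) a b) :=
  Injective.sumMap (finProdFinEquiv.injective.comp (Prod.mk_left_injective a))
    (finProdFinEquiv.injective.comp (Prod.mk_left_injective b))

lemma image_bipEdges_blockEmbedding (a : Fin t) (b : Fin s) :
    (bipEdges n m).image (Sym2.map (blockEmbedding a b)) =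
      univ.image fun p : Fin n × Fin m =>
        s(.inl (finProdFinEquiv (p.1, a)), .inr (finProdFinEquiv (p.2, b))) := by
  simp only [bipEdges, image_image]
  rfl

lemma pairwise_disjoint_blocks :
    Pairwise (Disjoint on fun ab : Fin t × Fin s =>
      (bipEdges n m).image (Sym2.map (blockEmbedding ab.1 ab.2))) := by
  rintro ⟨a, b⟩ ⟨a', b'⟩ hne
  simp only [onFun, image_bipEdges_blockEmbedding, disjoint_left, mem_image, mem_univ, true_and,
    Prod.exists, not_exists]
  rintro _ ⟨x, y, rfl⟩ x' y' h
  simp only [Sym2.eq_iff, Sum.inl.injEq, Sum.inr.injEq, reduceCtorEq, and_false, or_false,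
    finProdFinEquiv.apply_eq_iff_eq, Prod.mk.injEq] at h
  exact hne (by rw [h.1.2, h.2.2])

lemma sup_blocks :
    univ.sup (fun ab : Fin t × Fin s =>
      (bipEdges n m).image (Sym2.map (blockEmbedding ab.1 ab.2))) = bipEdges (n * t) (m * s) := by
  ext e
  simp only [mem_sup, image_bipEdges_blockEmbedding, mem_image, mem_univ, true_and, Prod.exists,
    mem_bipEdges]
  constructor
  · rintro ⟨a, b, x, y, rfl⟩
    exact ⟨_, _, rfl⟩
  · rintro ⟨u, w, rfl⟩
    obtain ⟨⟨x, a⟩, rfl⟩ := finProdFinEquiv.surjective u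
    obtain ⟨⟨y, b⟩, rfl⟩ := finProdFinEquiv.surjective w
    exact ⟨a, b, x, y, rfl⟩

end Blocks

theorem a2p_K4t4s_general (t s : ℕ) :
    HasA2PDecomp (bipEdges (4 * t) (4 * s)) := by
  have hblock (ab : Fin t × Fin s) :=
    (IsAlmost2PerfectDecomp.of_perm isCycleDecomp_k44Cycle (Equiv.addRight 1)
      isInsideOf_k44Cycle).map (blockEmbedding_injective ab.1 ab.2)
  have hblocks := IsAlmost2PerfectDecomp.sigma hblock pairwise_disjoint_blocks
  rw [sup_blocks] at hblocks
  exact hblocks.hasA2PDecomp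

/-- `K_{4t,4s}` has an almost 2-perfect 8-cycle decomposition. -/
theorem a2p_K4t4s (t s : ℕ) (ht : 0 < t) (hs : 0 < s) :
    HasA2PDecomp (bipEdges (4 * t) (4 * s)) :=
  a2p_K4t4s_general t s
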